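/- Let c, d be coprime integers, d ≥ 1, and let M_{c,d} = {f ∈ C^∞(ℝ×𝕋) : f(x+d, y) = e^{−2πicy} f(x,y)} (𝕋 = ℝ/ℤ in the y variable). Then M_{c,d} is isomorphic, as a module over C^∞(𝕋²), to the module of smooth sections of the rank-d vector bundle (𝕋×ℝ×ℂ^d)/ℤ → 𝕋², where the ℤ-action is generated by (x, y; v₁,…,v_d) ↦ (x, y+1; e^{2πicx} v_d, v₁,…,v_{d−1}). -/

import Mathlib

/-- Membership in `M_{c,d}`: smooth functions on `ℝ×𝕋` (period 1 in `y`) with the twisted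
boundary condition `f(x+d,y) = e^{−2πicy} f(x,y)`. -/
def MemM (c : ℤ) (d : ℕ) (f : ℝ × ℝ → ℂ) : Prop :=
  ContDiff ℝ (⊤ : ℕ∞) f ∧
  (∀ x y : ℝ, f (x + d, y) = Complex.exp (-(2 * Real.pi * Complex.I * c * y)) * f (x, y)) ∧
  (∀ x y : ℝ, f (x, y + 1) = f (x, y))

/-- Membership in the space of smooth sections of the rank-`d` bundle `(𝕋×ℝ×ℂ^d)/ℤ → 𝕋²`,
written as `ℤ`-equivariant smooth functions `ℝ×ℝ → ℂ^d`: periodic in `x`, and in `y`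
equivariant for the generator `(x,y;v₁,…,v_d) ↦ (x,y+1; e^{2πicx}v_d, v₁,…,v_{d−1})`. -/
def MemS (c : ℤ) (d : ℕ) (hd : 0 < d) (s : ℝ × ℝ → (Fin d → ℂ)) : Prop :=
  ContDiff ℝ (⊤ : ℕ∞) s ∧
  (∀ x y : ℝ, s (x + 1, y) = s (x, y)) ∧
  (∀ (x y : ℝ) (i : Fin d), s (x, y + 1) i =
    if i = (⟨0, hd⟩ : Fin d) then
      Complex.exp (2 * Real.pi * Complex.I * c * x) * s (x, y) ⟨d - 1, by omega⟩
    else s (x, y) ⟨i.1 - 1, by omega⟩)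

noncomputable def ee (t : ℂ) : ℂ := Complex.exp (2 * Real.pi * Complex.I * t)

lemma ee_add (a b : ℂ) : ee (a + b) = ee a * ee b := by
  simp [ee, mul_add, Complex.exp_add]

lemma ee_int (n : ℤ) : ee n = 1 := by
  rw [ee, show 2 * (Real.pi:ℂ) * Complex.I * n = n * (2 * Real.pi * Complex.I) by ring]
  exact Complex.exp_int_mul_two_pi_mul_I n

lemma ee_shift {a b : ℂ} (n : ℤ) (h : a = b + n) : ee a = ee b := by
  rw [h, ee_add, ee_int, mul_one]

lemma cd_ofReal : ContDiff ℝ (⊤ : ℕ∞) (fun x : ℝ => (x : ℂ)) := Complex.ofRealCLM.contDiff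
attribute [fun_prop] cd_ofReal

lemma cd_ee {g : ℝ × ℝ → ℂ} (hg : ContDiff ℝ (⊤ : ℕ∞) g) :
    ContDiff ℝ (⊤ : ℕ∞) (fun p => ee (g p)) :=
  (Complex.contDiff_exp (𝕜 := ℝ)).comp (contDiff_const.mul hg)

lemma ee_pow (t : ℂ) (n : ℕ) : ee (t * n) = ee t ^ n := by
  rw [ee, ee, show 2 * (Real.pi:ℂ) * Complex.I * (t * n) = n * (2 * Real.pi * Complex.I * t) by ring]
  exact Complex.exp_nat_mul _ n

lemma two_pi_I_ne : (2 * (Real.pi:ℂ) * Complex.I) ≠ 0 := by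
  simp [Real.pi_ne_zero, Complex.I_ne_zero]

lemma orth {c : ℤ} {d : ℕ} (hd : 0 < d) (hcop : IsCoprime c (d : ℤ)) (k : ℤ) :
    ∑ i ∈ Finset.range d, ee ((c : ℂ) * k * i / d) = if (d : ℤ) ∣ k then (d : ℂ) else 0 := by
  have hd0 : (d : ℂ) ≠ 0 := Nat.cast_ne_zero.mpr hd.ne'
  have hterm : ∀ i : ℕ, ee ((c : ℂ) * k * i / d) = ee ((c : ℂ) * k / d) ^ i := by
    intro i; rw [← ee_pow]; congr 1; ring
  simp only [hterm]
  by_cases hdk : (d : ℤ) ∣ k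
  · obtain ⟨t, ht⟩ := hdk
    have h1 : (c : ℂ) * k / d = ((c * t : ℤ) : ℂ) := by
      rw [ht]; push_cast; field_simp
    rw [if_pos ⟨t, ht⟩, h1, ee_int]
    simp
  · rw [if_neg hdk]
    have hz1 : ee ((c : ℂ) * k / d) ≠ 1 := by
      intro h
      rw [ee, Complex.exp_eq_one_iff] at h
      obtain ⟨n, hn⟩ := h
      have h3 : (c : ℂ) * k / d = n :=
        mul_left_cancel₀ two_pi_I_ne (hn.trans (by ring))
      have h4 : ((c * k : ℤ) : ℂ) = ((n * d : ℤ) : ℂ) := by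
        push_cast; field_simp at h3; linear_combination h3
      have h5 : c * k = n * d := by exact_mod_cast h4
      exact hdk (hcop.symm.dvd_of_dvd_mul_left ⟨n, by linarith⟩)
    rw [geom_sum_eq hz1]
    have hzd : ee ((c : ℂ) * k / d) ^ d = 1 := by
      rw [← ee_pow, show (c : ℂ) * k / d * d = ((c * k : ℤ) : ℂ) by push_cast; field_simp, ee_int]
    rw [hzd]
    simp

lemma shiftSum {T : ℕ → ℂ} {d : ℕ} (h : T d = T 0) :
    ∑ m ∈ Finset.range d, T (m + 1) = ∑ m ∈ Finset.range d, T m := by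
  have h1 := Finset.sum_range_succ' T d
  rw [Finset.sum_range_succ] at h1
  linear_combination h - h1

lemma per_nat {α : Type*} (F : ℝ × ℝ → α) (h : ∀ x y : ℝ, F (x + 1, y) = F (x, y)) :
    ∀ (n : ℕ) (x y : ℝ), F (x + n, y) = F (x, y) := by
  intro n
  induction n with
  | zero => simp
  | succ n ih =>
    intro x y
    have : (x + (n + 1 : ℕ) : ℝ) = (x + n) + 1 := by push_cast; ring
    rw [this, h, ih]



noncomputable def phiF (c : ℤ) (d : ℕ) (f : ℝ × ℝ → ℂ) : ℝ × ℝ → Fin d → ℂ :=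
  fun p i => ∑ m ∈ Finset.range d,
    ee (-((c : ℂ) * ((m : ℂ) + (p.1 : ℂ)) * (((i : ℕ) : ℂ) - (p.2 : ℂ)) / (d : ℂ))) *
      f (p.1 + (m : ℝ), p.2)

noncomputable def psiF (c : ℤ) (d : ℕ) (hd : 0 < d) (s : ℝ × ℝ → Fin d → ℂ) : ℝ × ℝ → ℂ :=
  fun p => (d : ℂ)⁻¹ * ∑ i ∈ Finset.range d,
    ee ((c : ℂ) * (p.1 : ℂ) * ((i : ℂ) - (p.2 : ℂ)) / (d : ℂ)) * s p ⟨i % d, Nat.mod_lt _ hd⟩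

-- the M boundary phase in terms of ee
lemma expM (y : ℝ) (c : ℤ) :
    Complex.exp (-(2 * Real.pi * Complex.I * c * y)) = ee (-((c:ℂ) * y)) := by
  rw [ee]; congr 1; ring

lemma expS (x : ℝ) (c : ℤ) :
    Complex.exp (2 * Real.pi * Complex.I * c * x) = ee ((c:ℂ) * x) := by
  rw [ee]; congr 1; ring

lemma memS_phiF {c : ℤ} {d : ℕ} (hd : 0 < d) {f : ℝ × ℝ → ℂ} (hf : MemM c d f) :
    MemS c d hd (phiF c d f) := by
  obtain ⟨hf1, hf2, hf3⟩ := hf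
  have hd0 : (d : ℂ) ≠ 0 := Nat.cast_ne_zero.mpr hd.ne'
  refine ⟨?_, ?_, ?_⟩
  · -- smoothness
    rw [contDiff_pi]
    intro i
    apply ContDiff.sum
    intro m _
    apply ContDiff.mul
    · apply cd_ee
      apply ContDiff.neg
      apply ContDiff.div_const
      fun_prop
    · exact hf1.comp (by fun_prop)
  · -- x-periodicity
    intro x y
    funext i
    simp only [phiF]
    have key : ∀ m ∈ Finset.range d,
        ee (-((c : ℂ) * ((m : ℂ) + (((x + 1 : ℝ), y).1 : ℂ)) * (((i : ℕ) : ℂ) - (((x + 1 : ℝ), y).2 : ℂ)) / (d : ℂ))) *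
          f (((x + 1 : ℝ), y).1 + (m : ℝ), ((x + 1 : ℝ), y).2)
        = (fun m : ℕ => ee (-((c : ℂ) * ((m : ℂ) + (x : ℂ)) * (((i : ℕ) : ℂ) - (y : ℂ)) / (d : ℂ))) *
            f (x + (m : ℝ), y)) (m + 1) := by
      intro m _
      simp only
      congr 2
      · push_cast; ring
      · push_cast; ring
    have hTd : (fun m : ℕ => ee (-((c : ℂ) * ((m : ℂ) + (x : ℂ)) * (((i : ℕ) : ℂ) - (y : ℂ)) / (d : ℂ))) *
            f (x + (m : ℝ), y)) d
        = (fun m : ℕ => ee (-((c : ℂ) * ((m : ℂ) + (x : ℂ)) * (((i : ℕ) : ℂ) - (y : ℂ)) / (d : ℂ))) *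
            f (x + (m : ℝ), y)) 0 := by
      simp only
      have hfd : f (x + ((d:ℕ):ℝ), y) = ee (-((c:ℂ)*(y:ℝ))) * f (x + ((0:ℕ):ℝ), y) := by
        rw [show (x + ((0:ℕ):ℝ)) = x by norm_num, hf2 x y, expM]
      rw [hfd, ← mul_assoc, ← ee_add]
      congr 1
      apply ee_shift (-(c * (i:ℕ)))
      push_cast
      field_simp
      ring
    rw [Finset.sum_congr rfl key,
      shiftSum (T := fun m : ℕ => ee (-((c : ℂ) * ((m : ℂ) + (x : ℂ)) * (((i : ℕ) : ℂ) - (y : ℂ)) / (d : ℂ))) *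
            f (x + (m : ℝ), y)) hTd]
  · -- y-equivariance
    intro x y i
    by_cases h0 : i = (⟨0, hd⟩ : Fin d)
    · rw [if_pos h0, expS]
      subst h0
      simp only [phiF, Finset.mul_sum]
      apply Finset.sum_congr rfl
      intro m _
      show ee _ * f (x + (m:ℝ), y + 1) = _
      rw [hf3, ← mul_assoc, ← ee_add]
      congr 1
      apply ee_shift (c * m)
      have hv0 : ((((⟨0, hd⟩ : Fin d) : ℕ)) : ℂ) = 0 := by norm_num
      have hv1 : (((⟨d - 1, by omega⟩ : Fin d) : ℕ) : ℂ) = (d : ℂ) - 1 := by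
        show (((d - 1 : ℕ)) : ℂ) = (d : ℂ) - 1
        have h1 : (1:ℕ) ≤ d := hd
        push_cast [Nat.cast_sub h1]
        ring
      rw [hv0, hv1]
      push_cast
      field_simp
      ring
    · rw [if_neg h0]
      simp only [phiF]
      apply Finset.sum_congr rfl
      intro m _
      show ee _ * f (x + (m:ℝ), y + 1) = _
      rw [hf3]
      congr 2
      have h1 : 1 ≤ i.1 := by
        rcases Nat.eq_zero_or_pos i.1 with h | h
        · exact absurd (Fin.ext h) h0
        · exact h
      have hv : (((⟨i.1 - 1, by omega⟩ : Fin d) : ℕ) : ℂ) = ((i:ℕ) : ℂ) - 1 := by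
        show ((i.1 - 1 : ℕ) : ℂ) = ((i:ℕ) : ℂ) - 1
        push_cast [Nat.cast_sub h1]
        ring
      rw [hv]
      push_cast
      ring

lemma memM_psiF {c : ℤ} {d : ℕ} (hd : 0 < d) {s : ℝ × ℝ → Fin d → ℂ} (hs : MemS c d hd s) :
    MemM c d (psiF c d hd s) := by
  obtain ⟨hs1, hs2, hs3⟩ := hs
  have hd0 : (d : ℂ) ≠ 0 := Nat.cast_ne_zero.mpr hd.ne'
  refine ⟨?_, ?_, ?_⟩
  · -- smoothness
    apply ContDiff.mul contDiff_const
    apply ContDiff.sum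
    intro i _
    apply ContDiff.mul
    · apply cd_ee
      apply ContDiff.div_const
      fun_prop
    · exact (contDiff_pi.1 hs1 _)
  · -- x quasi-periodicity
    intro x y
    rw [expM]
    simp only [psiF]
    rw [mul_left_comm (ee (-((c:ℂ) * (y:ℝ))))]
    congr 1
    rw [Finset.mul_sum]
    apply Finset.sum_congr rfl
    intro i _
    rw [per_nat s hs2 d x y]
    rw [← mul_assoc, ← ee_add]
    congr 1
    apply ee_shift ((c : ℤ) * i)
    push_cast
    field_simp
    ring
  · -- y-periodicity
    intro x y
    obtain ⟨e, rfl⟩ : ∃ e, d = e + 1 := ⟨d - 1, by omega⟩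
    simp only [psiF]
    congr 1
    rw [Finset.sum_range_succ', Finset.sum_range_succ]
    congr 1
    · -- shifted part
      apply Finset.sum_congr rfl
      intro i hi
      have hi' : i < e := Finset.mem_range.mp hi
      have hm1 : (i + 1) % (e + 1) = i + 1 := Nat.mod_eq_of_lt (by omega)
      have hm2 : i % (e + 1) = i := Nat.mod_eq_of_lt (by omega)
      rw [hs3 x y ⟨(i+1) % (e+1), Nat.mod_lt _ hd⟩]
      rw [if_neg (by simp only [Fin.mk.injEq, hm1]; omega)]
      have hidx : (⟨((⟨(i+1) % (e+1), Nat.mod_lt _ hd⟩ : Fin (e+1)) : ℕ) - 1, by omega⟩ : Fin (e+1))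
          = (⟨i % (e+1), Nat.mod_lt _ hd⟩ : Fin (e+1)) := by
        apply Fin.ext
        show (i+1) % (e+1) - 1 = i % (e+1)
        rw [hm1, hm2]
        omega
      rw [hidx]
      congr 2
      have hc : (((i+1 : ℕ)) : ℂ) = (i : ℂ) + 1 := by push_cast; ring
      rw [hc]
      push_cast
      ring
    · -- wrap term
      rw [hs3 x y ⟨0 % (e+1), Nat.mod_lt _ hd⟩]
      rw [if_pos (by apply Fin.ext; simp)]
      rw [expS]
      have hidx : (⟨e + 1 - 1, by omega⟩ : Fin (e+1)) = (⟨e % (e+1), Nat.mod_lt _ hd⟩ : Fin (e+1)) := by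
        apply Fin.ext
        show e + 1 - 1 = e % (e+1)
        rw [Nat.mod_eq_of_lt (by omega)]
        omega
      rw [hidx, ← mul_assoc, ← ee_add]
      congr 1
      apply ee_shift 0
      have hd0' : (e : ℂ) + 1 ≠ 0 := by push_cast at hd0; exact hd0
      push_cast
      field_simp
      ring

lemma ee_zero : ee 0 = 1 := by simpa using ee_int 0

lemma psiF_phiF {c : ℤ} {d : ℕ} (hd : 0 < d) (hcop : IsCoprime c (d : ℤ)) (f : ℝ × ℝ → ℂ) :
    psiF c d hd (phiF c d f) = f := by
  have hd0 : (d : ℂ) ≠ 0 := Nat.cast_ne_zero.mpr hd.ne'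
  funext p
  obtain ⟨x, y⟩ := p
  simp only [psiF, phiF]
  trans ((d:ℂ)⁻¹ * ∑ i ∈ Finset.range d, ∑ m ∈ Finset.range d,
    ee ((c:ℂ) * ((-(m:ℤ) : ℤ) : ℂ) * (i:ℂ) / (d:ℂ)) *
      (ee ((c:ℂ) * (m:ℂ) * ((y:ℝ):ℂ) / (d:ℂ)) * f (x + (m:ℝ), y)))
  · congr 1
    refine Finset.sum_congr rfl fun i hi => ?_
    rw [Finset.mul_sum]
    refine Finset.sum_congr rfl fun m hm => ?_
    rw [← mul_assoc, ← ee_add, ← mul_assoc, ← ee_add]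
    congr 1
    apply ee_shift 0
    rw [Nat.mod_eq_of_lt (Finset.mem_range.mp hi)]
    push_cast
    field_simp
    ring
  · rw [Finset.sum_comm]
    have key2 : ∀ m ∈ Finset.range d,
        (∑ i ∈ Finset.range d, ee ((c:ℂ) * ((-(m:ℤ) : ℤ) : ℂ) * (i:ℂ) / (d:ℂ)) *
          (ee ((c:ℂ) * (m:ℂ) * ((y:ℝ):ℂ) / (d:ℂ)) * f (x + (m:ℝ), y)))
        = (if (d:ℤ) ∣ (-(m:ℤ)) then (d:ℂ) else 0) *
          (ee ((c:ℂ) * (m:ℂ) * ((y:ℝ):ℂ) / (d:ℂ)) * f (x + (m:ℝ), y)) := by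
      intro m hm
      rw [← Finset.sum_mul, orth hd hcop]
    rw [Finset.sum_congr rfl key2]
    rw [Finset.sum_eq_single_of_mem 0 (Finset.mem_range.mpr hd)]
    · norm_num [ee_zero]
      field_simp
    · intro b _ hb0
      rw [if_neg, zero_mul]
      intro h
      rw [Int.dvd_neg, Int.natCast_dvd_natCast] at h
      have := Nat.le_of_dvd (Nat.pos_of_ne_zero hb0) h
      have hblt : b < d := Finset.mem_range.mp (by assumption)
      omega

lemma phiF_psiF {c : ℤ} {d : ℕ} (hd : 0 < d) (hcop : IsCoprime c (d : ℤ))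
    {s : ℝ × ℝ → Fin d → ℂ} (hs2 : ∀ x y : ℝ, s (x + 1, y) = s (x, y)) :
    phiF c d (psiF c d hd s) = s := by
  have hd0 : (d : ℂ) ≠ 0 := Nat.cast_ne_zero.mpr hd.ne'
  funext p i
  obtain ⟨x, y⟩ := p
  simp only [psiF, phiF]
  trans (∑ m ∈ Finset.range d, ∑ j ∈ Finset.range d, (d:ℂ)⁻¹ *
    (ee ((c:ℂ) * (((j:ℤ) - ((i:ℕ):ℤ) : ℤ) : ℂ) * (m:ℂ) / (d:ℂ)) *
      (ee ((c:ℂ) * ((x:ℝ):ℂ) * ((j:ℂ) - ((i:ℕ):ℂ)) / (d:ℂ)) * s (x, y) ⟨j % d, Nat.mod_lt _ hd⟩)))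
  · refine Finset.sum_congr rfl fun m hm => ?_
    rw [per_nat s hs2 m x y, ← mul_assoc, Finset.mul_sum]
    refine Finset.sum_congr rfl fun j hj => ?_
    rw [show ee (-((c : ℂ) * ((m : ℂ) + (x : ℂ)) * (((i : ℕ) : ℂ) - (y : ℂ)) / (d : ℂ))) * (d:ℂ)⁻¹ *
        (ee ((c : ℂ) * ((x + (m:ℝ) : ℝ) : ℂ) * ((j : ℂ) - (y : ℂ)) / (d : ℂ)) * s (x, y) ⟨j % d, Nat.mod_lt _ hd⟩)
      = (d:ℂ)⁻¹ * ((ee (-((c : ℂ) * ((m : ℂ) + (x : ℂ)) * (((i : ℕ) : ℂ) - (y : ℂ)) / (d : ℂ))) *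
          ee ((c : ℂ) * ((x + (m:ℝ) : ℝ) : ℂ) * ((j : ℂ) - (y : ℂ)) / (d : ℂ))) * s (x, y) ⟨j % d, Nat.mod_lt _ hd⟩)
      from by ring]
    rw [← ee_add]
    congr 1
    rw [← mul_assoc, ← ee_add]
    congr 1
    apply ee_shift 0
    push_cast
    field_simp
    ring
  · rw [Finset.sum_comm]
    have key2 : ∀ j ∈ Finset.range d,
        (∑ m ∈ Finset.range d, (d:ℂ)⁻¹ *
          (ee ((c:ℂ) * (((j:ℤ) - ((i:ℕ):ℤ) : ℤ) : ℂ) * (m:ℂ) / (d:ℂ)) *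
            (ee ((c:ℂ) * ((x:ℝ):ℂ) * ((j:ℂ) - ((i:ℕ):ℂ)) / (d:ℂ)) * s (x, y) ⟨j % d, Nat.mod_lt _ hd⟩)))
        = (d:ℂ)⁻¹ * ((if (d:ℤ) ∣ ((j:ℤ) - ((i:ℕ):ℤ)) then (d:ℂ) else 0) *
            (ee ((c:ℂ) * ((x:ℝ):ℂ) * ((j:ℂ) - ((i:ℕ):ℂ)) / (d:ℂ)) * s (x, y) ⟨j % d, Nat.mod_lt _ hd⟩)) := by
      intro j hj
      rw [← Finset.mul_sum, ← Finset.sum_mul, orth hd hcop]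
    rw [Finset.sum_congr rfl key2]
    rw [Finset.sum_eq_single_of_mem (i:ℕ) (Finset.mem_range.mpr i.isLt)]
    · rw [if_pos (by simp)]
      rw [show (c:ℂ) * ((x:ℝ):ℂ) * (((i:ℕ):ℂ) - ((i:ℕ):ℂ)) / (d:ℂ) = 0 by ring, ee_zero]
      rw [show (⟨(i:ℕ) % d, Nat.mod_lt _ hd⟩ : Fin d) = i from Fin.ext (Nat.mod_eq_of_lt i.isLt)]
      field_simp
    · intro b hb hbne
      have hblt : b < d := Finset.mem_range.mp hb
      have hdvd : ¬ (d:ℤ) ∣ ((b:ℤ) - ((i:ℕ):ℤ)) := by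
        intro h
        have hne : (b:ℤ) - ((i:ℕ):ℤ) ≠ 0 := by
          intro h0
          apply hbne
          omega
        have h2 : (d:ℤ) ∣ |(b:ℤ) - ((i:ℕ):ℤ)| := (dvd_abs _ _).mpr h
        have h3 := Int.le_of_dvd (abs_pos.mpr hne) h2
        have h4 : |(b:ℤ) - ((i:ℕ):ℤ)| < d := by
          rw [abs_lt]
          have := i.isLt
          omega
        omega
      rw [if_neg hdvd]
      simp


/-- `M_{c,d}` is isomorphic, as a module over `C^∞(𝕋²)`, to the module of smooth sections
of the rank-`d` vector bundle `(𝕋×ℝ×ℂ^d)/ℤ → 𝕋²`: there is a bijection which is additive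
and commutes with multiplication by every smooth doubly-periodic function. -/
theorem stmt16 (c : ℤ) (d : ℕ) (hd : 0 < d) (hcop : IsCoprime c (d : ℤ)) :
    ∃ Φ : { f : ℝ × ℝ → ℂ // MemM c d f } ≃ { s : ℝ × ℝ → (Fin d → ℂ) // MemS c d hd s },
      (∀ F₁ F₂ G : { f : ℝ × ℝ → ℂ // MemM c d f },
        G.1 = F₁.1 + F₂.1 → (Φ G).1 = (Φ F₁).1 + (Φ F₂).1) ∧
      (∀ g : ℝ × ℝ → ℂ, ContDiff ℝ (⊤ : ℕ∞) g →
        (∀ x y : ℝ, g (x + 1, y) = g (x, y)) → (∀ x y : ℝ, g (x, y + 1) = g (x, y)) →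
        ∀ F G : { f : ℝ × ℝ → ℂ // MemM c d f },
          G.1 = g * F.1 → ∀ p : ℝ × ℝ, (Φ G).1 p = g p • (Φ F).1 p) := by
  refine ⟨⟨fun F => ⟨phiF c d F.1, memS_phiF hd F.2⟩,
           fun S => ⟨psiF c d hd S.1, memM_psiF hd S.2⟩, ?_, ?_⟩, ?_, ?_⟩
  · intro F
    exact Subtype.ext (psiF_phiF hd hcop F.1)
  · intro S
    exact Subtype.ext (phiF_psiF hd hcop S.2.2.1)
  · -- additivity
    intro F₁ F₂ G hG
    show phiF c d G.1 = phiF c d F₁.1 + phiF c d F₂.1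
    funext p i
    simp only [phiF, hG, Pi.add_apply]
    rw [← Finset.sum_add_distrib]
    exact Finset.sum_congr rfl fun m _ => by ring
  · -- module property
    intro g hg hgx hgy F G hG p
    show phiF c d G.1 p = g p • phiF c d F.1 p
    funext i
    simp only [phiF, hG, Pi.mul_apply, Pi.smul_apply, smul_eq_mul, Finset.mul_sum]
    refine Finset.sum_congr rfl fun m _ => ?_
    rw [per_nat g hgx m p.1 p.2, Prod.mk.eta]
    ring
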